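/- Let π be a probability measure on ℝ with inf supp(π) < 0 < sup supp(π), and fix d > 0. Then the function u ↦ G(u,d) is twice differentiable on (m(π), M(π)) and for every u ∈ (m(π), M(π)) its second derivative equals the reciprocal of the variance of the tilted measure: ∂²G/∂u²(u,d) = 1 / Var_{X ∼ π^{(h(u,d),d)}}(X), which is strictly positive. -/

import Mathlib

open MeasureTheory ProbabilityTheory Filter Set

/-- The (topological) support of a measure on `ℝ`: points all of whose neighborhoods
have positive measure. -/
def msupp (pr : MeasureTheory.Measure ℝ) : Set ℝ := {x : ℝ | ∀ U ∈ nhds x, pr U ≠ 0}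

/-- The cumulant generating function `c(γ₁, γ₂) = log ∫ exp(γ₁ x - γ₂/2 x²) dπ(x)`. -/
noncomputable def cgf (pr : MeasureTheory.Measure ℝ) (γ₁ γ₂ : ℝ) : ℝ :=
  Real.log (∫ x, Real.exp (γ₁ * x - γ₂ / 2 * x ^ 2) ∂pr)

/-- The exponentially tilted measure `π^{(γ₁, γ₂)}`, with density
`exp(γ₁ x - γ₂/2 x² - c(γ₁,γ₂))` with respect to `π`. -/
noncomputable def tilt (pr : MeasureTheory.Measure ℝ) (γ₁ γ₂ : ℝ) : MeasureTheory.Measure ℝ :=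
  pr.withDensity fun x => ENNReal.ofReal (Real.exp (γ₁ * x - γ₂ / 2 * x ^ 2 - cgf pr γ₁ γ₂))

/-- The mean of the tilted measure `π^{(γ₁, γ₂)}`. -/
noncomputable def tiltMean (pr : MeasureTheory.Measure ℝ) (γ₁ γ₂ : ℝ) : ℝ :=
  ∫ x, x ∂(tilt pr γ₁ γ₂)

open scoped Topology

/-!
Let `ν` be `π` reweighted by `exp(-d x²/2)` and `K` its cumulant generating function. Then
`π^{(γ,d)}` is the exponential tilt of `ν` by `γ x` and `K = c(·,d) - c(0,d)`, so `G(·,d)` is the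
Legendre transform `u ↦ u h(u) - K(h(u))` with `K'(h(u)) = u`. As `K''(γ)` is the variance of the
tilted law, positive because `π` is not a point mass, `K'` is strictly increasing; its right
inverse `h` therefore has derivative `1 / K''(h(u))`, and by the envelope theorem `G' = h`, whence
`G'' = 1 / K''(h(u))`.
-/

section Legendre

variable {K K' K'' h : ℝ → ℝ} {v : ℝ}

lemma StrictMono.continuousAt_of_local_left_inverse {T : ℝ → ℝ} (hT : StrictMono T)
    (hTc : ContinuousAt T (h v)) (hTh : ∀ᶠ w in 𝓝 v, T (h w) = w) : ContinuousAt h v := by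
  have hmono : StrictMonoOn h {w | T (h w) = w} :=
    fun a (ha : T (h a) = a) b (hb : T (h b) = b) hab => hT.lt_iff_lt.1 (by rwa [ha, hb])
  refine hmono.continuousAt_of_image_mem_nhds hTh
    (mem_of_superset (hTc.preimage_mem_nhds (t := {w | T (h w) = w}) ?_) ?_)
  · rwa [hTh.self_of_nhds]
  · rintro γ (hγ : T (h (T γ)) = T γ)
    exact ⟨T γ, hγ, hT.injective hγ⟩

lemma hasDerivAt_of_local_left_inverse_of_deriv_pos (hK' : ∀ γ, HasDerivAt K' (K'' γ) γ)
    (hK'' : ∀ γ, 0 < K'' γ) (hh : ∀ᶠ w in 𝓝 v, K' (h w) = w) :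
    HasDerivAt h (K'' (h v))⁻¹ v :=
  have hmono := strictMono_of_hasDerivAt_pos hK' hK''
  (hK' (h v)).of_local_left_inverse
    (hmono.continuousAt_of_local_left_inverse (hK' (h v)).continuousAt hh) (hK'' _).ne' hh

lemma hasDerivAt_legendre {h' : ℝ} (hK : HasDerivAt K v (h v)) (hh : HasDerivAt h h' v) :
    HasDerivAt (fun w => w * h w - K (h w)) (h v) v := by
  simpa using ((hasDerivAt_id' v).fun_mul hh).fun_sub (hK.comp v hh)

lemma hasDerivAt_deriv_legendre {I : Set ℝ} (hK : ∀ γ, HasDerivAt K (K' γ) γ)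
    (hK' : ∀ γ, HasDerivAt K' (K'' γ) γ) (hK'' : ∀ γ, 0 < K'' γ) (hI : IsOpen I)
    (hh : ∀ w ∈ I, K' (h w) = w) (hv : v ∈ I) :
    DifferentiableAt ℝ (fun w => w * h w - K (h w)) v ∧
      HasDerivAt (deriv fun w => w * h w - K (h w)) (K'' (h v))⁻¹ v := by
  have hh_nhds : ∀ w ∈ I, ∀ᶠ z in 𝓝 w, K' (h z) = z := fun w hw =>
    eventually_of_mem (hI.mem_nhds hw) hh
  have hG : ∀ w ∈ I, HasDerivAt (fun w => w * h w - K (h w)) (h w) w := fun w hw =>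
    hasDerivAt_legendre ((hK (h w)).congr_deriv (hh w hw))
      (hasDerivAt_of_local_left_inverse_of_deriv_pos hK' hK'' (hh_nhds w hw))
  refine ⟨(hG v hv).differentiableAt, ?_⟩
  exact (hasDerivAt_of_local_left_inverse_of_deriv_pos hK' hK'' (hh_nhds v hv)
    ).congr_of_eventuallyEq (eventually_of_mem (hI.mem_nhds hv) fun w hw => (hG w hw).deriv)

end Legendre

lemma variance_pos_of_forall_not_ae_eq {Ω : Type*} [MeasurableSpace Ω] {μ : Measure Ω}
    [IsFiniteMeasure μ] {X : Ω → ℝ} (hX : MemLp X 2 μ) (h : ∀ c, ¬ ∀ᵐ ω ∂μ, X ω = c) :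
    0 < variance X μ :=
  (variance_nonneg X μ).lt_of_ne fun h0 => h _ (ae_eq_integral_of_variance_eq_zero hX h0.symm)

lemma not_ae_eq_const_of_mem_msupp {pr : Measure ℝ} {x y : ℝ} (hx : x ∈ msupp pr)
    (hy : y ∈ msupp pr) (hxy : x ≠ y) (c : ℝ) : ¬ ∀ᵐ z ∂pr, z = c := by
  rw [ae_iff]
  rcases eq_or_ne x c with rfl | hxc
  · exact hy _ (isOpen_compl_singleton.mem_nhds hxy.symm)
  · exact hx _ (isOpen_compl_singleton.mem_nhds hxc)

lemma mul_sub_half_mul_sq_le {d : ℝ} (hd : 0 < d) (b x : ℝ) :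
    b * x - d / 2 * x ^ 2 ≤ b ^ 2 / (2 * d) := by
  rw [le_div_iff₀ (by positivity)]
  nlinarith [sq_nonneg (d * x - b)]

noncomputable def gaussTilt (pr : Measure ℝ) (d : ℝ) : Measure ℝ :=
  pr.tilted fun x => -(d / 2 * x ^ 2)

section Tilt

variable {pr : Measure ℝ} [IsFiniteMeasure pr] {d : ℝ}

lemma integrable_exp_mul_sub_sq (hd : 0 < d) (γ : ℝ) :
    Integrable (fun x => Real.exp (γ * x - d / 2 * x ^ 2)) pr := by
  refine Integrable.mono' (integrable_const (Real.exp (γ ^ 2 / (2 * d))))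
    (by fun_prop : Continuous _).aestronglyMeasurable (ae_of_all _ fun x => ?_)
  rw [Real.norm_eq_abs, abs_of_pos (Real.exp_pos _)]
  exact Real.exp_le_exp.2 (mul_sub_half_mul_sq_le hd γ x)

lemma integrable_exp_neg_half_mul_sq (hd : 0 < d) :
    Integrable (fun x => Real.exp (-(d / 2 * x ^ 2))) pr := by
  simpa using integrable_exp_mul_sub_sq (pr := pr) hd 0

lemma mem_interior_integrableExpSet_gaussTilt (hd : 0 < d) (γ : ℝ) :
    γ ∈ interior (integrableExpSet id (gaussTilt pr d)) := by
  have huniv : integrableExpSet id (gaussTilt pr d) = univ := by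
    refine eq_univ_of_forall fun γ => ?_
    rw [integrableExpSet, mem_ofPred_eq, gaussTilt,
      integrable_tilted_iff (integrable_exp_neg_half_mul_sq hd)]
    simpa [← Real.exp_add, sub_eq_neg_add] using integrable_exp_mul_sub_sq (pr := pr) hd γ
  simp [huniv]

lemma hasDerivAt_cgf_gaussTilt (hd : 0 < d) (γ : ℝ) :
    HasDerivAt (ProbabilityTheory.cgf id (gaussTilt pr d))
      (deriv (ProbabilityTheory.cgf id (gaussTilt pr d)) γ) γ :=
  (analyticAt_cgf (mem_interior_integrableExpSet_gaussTilt hd γ)).differentiableAt.hasDerivAt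

lemma hasDerivAt_deriv_cgf_gaussTilt (hd : 0 < d) (γ : ℝ) :
    HasDerivAt (deriv (ProbabilityTheory.cgf id (gaussTilt pr d)))
      (iteratedDeriv 2 (ProbabilityTheory.cgf id (gaussTilt pr d)) γ) γ := by
  rw [iteratedDeriv_succ, iteratedDeriv_one]
  exact (analyticAt_cgf (mem_interior_integrableExpSet_gaussTilt hd γ)).deriv.differentiableAt
    |>.hasDerivAt

variable [NeZero pr]

lemma tilt_eq_tilted_gaussTilt (hd : 0 < d) (γ : ℝ) :
    tilt pr γ d = (gaussTilt pr d).tilted (γ * id ·) := by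
  have hexponent :
      ((fun x => -(d / 2 * x ^ 2)) + (γ * id ·)) = fun x => γ * x - d / 2 * x ^ 2 := by
    funext x
    simp only [Pi.add_apply, id]
    ring
  rw [gaussTilt, tilted_tilted (integrable_exp_neg_half_mul_sq hd), hexponent, tilt,
    Measure.tilted]
  refine congrArg pr.withDensity (funext fun x => ?_)
  rw [_root_.cgf, Real.exp_sub, Real.exp_log (integral_exp_pos (integrable_exp_mul_sub_sq hd γ))]

lemma cgf_gaussTilt (hd : 0 < d) (γ : ℝ) :
    ProbabilityTheory.cgf id (gaussTilt pr d) γ = cgf pr γ d - cgf pr 0 d := by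
  have hmgf : mgf id (gaussTilt pr d) γ =
      (∫ x, Real.exp (γ * x - d / 2 * x ^ 2) ∂pr) / ∫ x, Real.exp (0 * x - d / 2 * x ^ 2) ∂pr := by
    rw [mgf, gaussTilt, integral_tilted, ← integral_div]
    refine integral_congr_ae (ae_of_all _ fun x => ?_)
    simp only [smul_eq_mul, id, zero_mul, zero_sub, div_mul_eq_mul_div, ← Real.exp_add]
    ring_nf
  rw [ProbabilityTheory.cgf, hmgf,
    Real.log_div (integral_exp_pos (integrable_exp_mul_sub_sq hd γ)).ne'
      (integral_exp_pos (integrable_exp_mul_sub_sq hd 0)).ne', _root_.cgf, _root_.cgf]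

lemma tiltMean_eq_deriv_cgf (hd : 0 < d) (γ : ℝ) :
    tiltMean pr γ d = deriv (ProbabilityTheory.cgf id (gaussTilt pr d)) γ := by
  rw [tiltMean, tilt_eq_tilted_gaussTilt hd]
  exact integral_tilted_mul_self (mem_interior_integrableExpSet_gaussTilt hd γ)

lemma variance_tilt_eq_iteratedDeriv_cgf (hd : 0 < d) (γ : ℝ) :
    variance id (tilt pr γ d) =
      iteratedDeriv 2 (ProbabilityTheory.cgf id (gaussTilt pr d)) γ := by
  rw [tilt_eq_tilted_gaussTilt hd]
  exact variance_tilted_mul (mem_interior_integrableExpSet_gaussTilt hd γ)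

lemma variance_tilt_pos (hd : 0 < d) {x y : ℝ} (hx : x ∈ msupp pr) (hy : y ∈ msupp pr)
    (hxy : x ≠ y) (γ : ℝ) : 0 < variance id (tilt pr γ d) := by
  have hγ := mem_interior_integrableExpSet_gaussTilt (pr := pr) hd γ
  have hac : pr ≪ (gaussTilt pr d).tilted (γ * id ·) :=
    (absolutelyContinuous_tilted (integrable_exp_neg_half_mul_sq (pr := pr) hd)).trans
      (absolutelyContinuous_tilted (interior_subset (s := integrableExpSet id _) hγ))
  rw [tilt_eq_tilted_gaussTilt hd]
  exact variance_pos_of_forall_not_ae_eq (memLp_tilted_mul hγ 2)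
    fun c hc => not_ae_eq_const_of_mem_msupp hx hy hxy c (hac.ae_le hc)

end Tilt

/-- with `h(·,d)` the (unique) tilt parameter matching a prescribed mean,
the function `G(·,d) : u ↦ u·h(u,d) − c(h(u,d),d) + c(0,d)` is twice differentiable on
`(m(π), M(π))` and its second derivative at `u` equals the reciprocal of the variance of
the tilted measure `π^{(h(u,d),d)}`, which is strictly positive. -/
theorem stmt4 (pr : Measure ℝ) [IsProbabilityMeasure pr]
    (hneg : ∃ x ∈ msupp pr, x < 0) (hpos : ∃ x ∈ msupp pr, 0 < x)
    (d : ℝ) (hd : 0 < d) (h : ℝ → ℝ)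
    (hh : ∀ u : ℝ, (∃ x ∈ msupp pr, x < u) → (∃ x ∈ msupp pr, u < x) →
      tiltMean pr (h u) d = u)
    (u : ℝ) (hul : ∃ x ∈ msupp pr, x < u) (huu : ∃ x ∈ msupp pr, u < x) :
    DifferentiableAt ℝ (fun v => v * h v - cgf pr (h v) d + cgf pr 0 d) u ∧
    HasDerivAt (deriv (fun v => v * h v - cgf pr (h v) d + cgf pr 0 d))
      (1 / ProbabilityTheory.variance id (tilt pr (h u) d)) u ∧
    0 < 1 / ProbabilityTheory.variance id (tilt pr (h u) d) := by
  obtain ⟨xn, hxn, hxn0⟩ := hneg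
  obtain ⟨xp, hxp, hxp0⟩ := hpos
  obtain ⟨a, ha, hau⟩ := hul
  obtain ⟨b, hb, hub⟩ := huu
  set K := ProbabilityTheory.cgf id (gaussTilt pr d) with hK_def
  have hK''_pos : ∀ γ, 0 < iteratedDeriv 2 K γ := fun γ => by
    rw [← variance_tilt_eq_iteratedDeriv_cgf hd]
    exact variance_tilt_pos hd hxn hxp (hxn0.trans hxp0).ne γ
  have hmean : ∀ v ∈ Ioo a b, deriv K (h v) = v := fun v hv => by
    rw [← tiltMean_eq_deriv_cgf hd, hh v ⟨a, ha, hv.1⟩ ⟨b, hb, hv.2⟩]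
  have hG : (fun v => v * h v - cgf pr (h v) d + cgf pr 0 d) = fun v => v * h v - K (h v) := by
    funext v
    rw [hK_def, cgf_gaussTilt hd]
    ring
  obtain ⟨hdiff, hderiv⟩ := hasDerivAt_deriv_legendre (hasDerivAt_cgf_gaussTilt hd)
    (hasDerivAt_deriv_cgf_gaussTilt hd) hK''_pos isOpen_Ioo hmean ⟨hau, hub⟩
  rw [hG, variance_tilt_eq_iteratedDeriv_cgf hd, one_div]
  exact ⟨hdiff, hderiv, inv_pos.2 (hK''_pos _)⟩
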